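/- Let Δ = Δ1 ∪_{Σ1,Σ2} Δ2 be a consistent belief base with syntax splitting and let ω^a, ω^b, ω' ∈ Ω_Σ with ω^a|_{Σ1} = ω^b|_{Σ1}. Then ω^a ≺_{Δ1} ω' if and only if ω^b ≺_{Δ1} ω'. -/
import Mathlib


open scoped Classical

namespace SysW

/-- Propositional formulas over a signature (set of atoms) `V`. -/
inductive PForm (V : Type) : Type
  | var (v : V)
  | tru
  | fls
  | neg (φ : PForm V)
  | conj (φ ψ : PForm V)
  | disj (φ ψ : PForm V)

/-- Evaluation of a formula in a world `ω : V → Bool`. -/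
def PForm.eval {V : Type} (ω : V → Bool) : PForm V → Bool
  | var v => ω v
  | tru => true
  | fls => false
  | neg φ => !(PForm.eval ω φ)
  | conj φ ψ => PForm.eval ω φ && PForm.eval ω ψ
  | disj φ ψ => PForm.eval ω φ || PForm.eval ω ψ

/-- The atoms occurring in a formula. -/
def PForm.vars {V : Type} : PForm V → Set V
  | var v => {v}
  | tru => ∅
  | fls => ∅
  | neg φ => PForm.vars φ
  | conj φ ψ => PForm.vars φ ∪ PForm.vars ψ
  | disj φ ψ => PForm.vars φ ∪ PForm.vars ψ

/-- A conditional (B|A): "if `ante` then usually `cons`". -/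
structure CondRule (V : Type) : Type where
  cons : PForm V
  ante : PForm V

/-- The atoms occurring in a conditional. -/
def condVars {V : Type} (r : CondRule V) : Set V := r.ante.vars ∪ r.cons.vars

/-- `ω` verifies (B|A) iff `ω ⊨ A ∧ B`. -/
def verifies {V : Type} (ω : V → Bool) (r : CondRule V) : Prop :=
  r.ante.eval ω = true ∧ r.cons.eval ω = true

/-- `ω` falsifies (B|A) iff `ω ⊨ A ∧ ¬B`. -/
def falsifies {V : Type} (ω : V → Bool) (r : CondRule V) : Prop :=
  r.ante.eval ω = true ∧ r.cons.eval ω = false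

/-- A conditional `r` is tolerated by a set of conditionals `S` if some world
verifies `r` and falsifies no conditional of `S`. -/
def Tolerated {V : Type} (S : Finset (CondRule V)) (r : CondRule V) : Prop :=
  ∃ ω : V → Bool, verifies ω r ∧ ∀ r' ∈ S, ¬ falsifies ω r'

/-- `rest Δ j` is what remains of `Δ` after removing the first `j` parts
`Δ^0, …, Δ^{j-1}` of the tolerance partition. -/
noncomputable def rest {V : Type} (Δ : Finset (CondRule V)) : ℕ → Finset (CondRule V)
  | 0 => Δ
  | j + 1 => (rest Δ j).filter (fun r => ¬ Tolerated (rest Δ j) r)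

/-- `part Δ j` is the part `Δ^j` of the inclusion-maximal tolerance partition of `Δ`:
the conditionals of `rest Δ j` tolerated by `rest Δ j`. -/
noncomputable def part {V : Type} (Δ : Finset (CondRule V)) (j : ℕ) : Finset (CondRule V) :=
  (rest Δ j).filter (fun r => Tolerated (rest Δ j) r)

/-- `Δ` is consistent iff the tolerance partitioning process exhausts `Δ`. -/
def Consistent {V : Type} (Δ : Finset (CondRule V)) : Prop :=
  ∃ n, rest Δ n = ∅

/-- The tolerance partition of `Δ` is `OP(Δ) = (Δ^0, …, Δ^k)`, i.e. the process
stops exactly after the part with index `k` (all parts `Δ^0, …, Δ^k` nonempty). -/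
def IsOPLength {V : Type} (Δ : Finset (CondRule V)) (k : ℕ) : Prop :=
  rest Δ (k + 1) = ∅ ∧ rest Δ k ≠ ∅

/-- `fpart Δ j ω` = `f_Δ^j(ω)`, the set of conditionals of `Δ^j` falsified by `ω`. -/
noncomputable def fpart {V : Type} (Δ : Finset (CondRule V)) (j : ℕ) (ω : V → Bool) :
    Finset (CondRule V) :=
  (part Δ j).filter (fun r => falsifies ω r)

/-- The preferred structure on worlds `ω ≺_Δ ω'`: there is `m` such that
`f_Δ^i(ω) = f_Δ^i(ω')` for all `i > m` and `f_Δ^m(ω) ⊊ f_Δ^m(ω')`.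
(For `i` beyond the last index `k` of the tolerance partition of a consistent `Δ`,
both sides are empty, so this agrees with the textbook definition.) -/
noncomputable def prefRel {V : Type} (Δ : Finset (CondRule V)) (ω ω' : V → Bool) : Prop :=
  ∃ m : ℕ, (∀ i, m < i → fpart Δ i ω = fpart Δ i ω') ∧ fpart Δ m ω ⊂ fpart Δ m ω'

/-- System W inference `A |~_Δ^w B`: for every world `ω' ⊨ A ∧ ¬B` there is a
world `ω ⊨ A ∧ B` with `ω ≺_Δ ω'`. -/
noncomputable def SysWInf {V : Type} (Δ : Finset (CondRule V)) (A B : PForm V) : Prop :=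
  ∀ ω' : V → Bool, A.eval ω' = true ∧ B.eval ω' = false →
    ∃ ω : V → Bool, (A.eval ω = true ∧ B.eval ω = true) ∧ prefRel Δ ω ω'

/-- `Δ = Δ1 ∪_{Sig1,Sig2} Δ2`: `{Sig1, Sig2}` is a partition of the signature, `{Δ1, Δ2}`
partitions `Δ`, and every conditional of `Δi` uses only atoms from `Σi`. -/
def SyntaxSplitting {V : Type} (Sig1 Sig2 : Set V) (Δ Δ1 Δ2 : Finset (CondRule V)) : Prop :=
  Sig1 ∪ Sig2 = Set.univ ∧ Disjoint Sig1 Sig2 ∧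
  Δ = Δ1 ∪ Δ2 ∧ Disjoint Δ1 Δ2 ∧
  (∀ r ∈ Δ1, condVars r ⊆ Sig1) ∧ (∀ r ∈ Δ2, condVars r ⊆ Sig2)

end SysW

namespace SysW

lemma eval_congr {V : Type} (φ : PForm V) (ω ω' : V → Bool)
    (h : ∀ v ∈ φ.vars, ω v = ω' v) : φ.eval ω = φ.eval ω' := by
  induction φ with
  | var v => exact h v rfl
  | tru => rfl
  | fls => rfl
  | neg φ ih => simp [PForm.eval, ih h]
  | conj φ ψ ih1 ih2 =>
      simp only [PForm.eval]
      rw [ih1 (fun v hv => h v (Or.inl hv)), ih2 (fun v hv => h v (Or.inr hv))]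
  | disj φ ψ ih1 ih2 =>
      simp only [PForm.eval]
      rw [ih1 (fun v hv => h v (Or.inl hv)), ih2 (fun v hv => h v (Or.inr hv))]

lemma falsifies_congr {V : Type} (r : CondRule V) (ω ω' : V → Bool)
    (h : ∀ v ∈ condVars r, ω v = ω' v) : falsifies ω r ↔ falsifies ω' r := by
  unfold falsifies
  rw [eval_congr r.ante ω ω' (fun v hv => h v (Or.inl hv)),
      eval_congr r.cons ω ω' (fun v hv => h v (Or.inr hv))]

lemma rest_subset {V : Type} (Δ : Finset (CondRule V)) (j : ℕ) : rest Δ j ⊆ Δ := by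
  induction j with
  | zero => exact Finset.Subset.refl _
  | succ j ih => exact fun r hr => ih (Finset.mem_filter.mp hr).1

lemma fpart_congr {V : Type} (Δ : Finset (CondRule V)) (Sig : Set V)
    (hΔ : ∀ r ∈ Δ, condVars r ⊆ Sig) (j : ℕ) (ω ω' : V → Bool)
    (h : ∀ v ∈ Sig, ω v = ω' v) : fpart Δ j ω = fpart Δ j ω' := by
  unfold fpart
  apply Finset.filter_congr
  intro r hr
  have hrΔ : r ∈ Δ := rest_subset Δ j (Finset.mem_filter.mp hr).1
  simp only [falsifies_congr r ω ω' (fun v hv => h v (hΔ r hrΔ hv))]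

end SysW

open SysW in
/-- For a consistent belief base `Δ = Δ1 ∪_{Σ1,Σ2} Δ2` with syntax splitting
and worlds `ωa, ωb, ω'` with `ωa|_{Σ1} = ωb|_{Σ1}`, we have `ωa ≺_{Δ1} ω'` iff `ωb ≺_{Δ1} ω'`. -/
theorem stmt5 {V : Type} [Fintype V] (Sig1 Sig2 : Set V) (Δ Δ1 Δ2 : Finset (CondRule V))
    (hsplit : SyntaxSplitting Sig1 Sig2 Δ Δ1 Δ2) (hcons : Consistent Δ)
    (ωa ωb ω' : V → Bool) (hagree : ∀ v ∈ Sig1, ωa v = ωb v) :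
    prefRel Δ1 ωa ω' ↔ prefRel Δ1 ωb ω' := by
  have key : ∀ j, fpart Δ1 j ωa = fpart Δ1 j ωb :=
    fun j => fpart_congr Δ1 Sig1 hsplit.2.2.2.2.1 j ωa ωb hagree
  unfold prefRel
  simp only [key]
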